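/- arXiv:2206.12569 — 2 statements merged into one kernel-verified Lean document; each statement's English description precedes it below -/
import Mathlib

section
/- Warm-start equals cold-start for kernel regression along a nested chain (Theorem 1): Let S₀ ⊆ S₁ ⊆ ⋯ ⊆ S_{C−1} be a monotone chain of finite subsets of X such that every Gram matrix K_{S_i} is invertible. Let f₀ : X → ℝ be arbitrary and define recursively f_{i+1} as the kernel-regression update of f_i on S_i, for i = 0, …, C−1. Then f_C equals the kernel-regression update of f₀ on S_{C−1}: sequentially retraining (warm-starting) on the increasing datasets S₀, …, S_{C−1} produces, at every point x ∈ X, the same prediction as training from scratch on the largest dataset S_{C−1} alone. -/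
/-!
Retraining on `S` sees its base predictor only modulo the span of the kernel sections
`K · j`, `j ∈ S`: a perturbation `K_S α` of the residual on `S` is undone exactly by `K_S⁻¹`.
An update on `T ⊆ S` changes the predictor by a combination of sections `K · j`, `j ∈ T`, so a
subsequent update on `S` absorbs it, and induction along the chain collapses all updates into
the last one.
-/

open Matrix

def gramMatrix {X : Type*} (K : X → X → ℝ) (S : Finset X) : Matrix S S ℝ :=
  Matrix.of fun i j => K i j

noncomputable def krUpdate {X : Type*} [DecidableEq X] (K : X → X → ℝ) (Y : X → ℝ)
    (f : X → ℝ) (S : Finset X) : X → ℝ :=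
  fun x => f x + (fun j : S => K x j) ⬝ᵥ (gramMatrix K S)⁻¹.mulVec (fun j : S => Y j - f j)

theorem dotProduct_comp_eq_dotProduct_extend {ι κ R : Type*} [Fintype ι] [Fintype κ]
    [NonUnitalNonAssocSemiring R] {e : ι → κ} (he : Function.Injective e) (u : κ → R)
    (v : ι → R) : (u ∘ e) ⬝ᵥ v = u ⬝ᵥ Function.extend e v 0 := by
  refine Fintype.sum_of_injective e he _ _ (fun k hk => ?_) (fun i => ?_)
  · rw [Function.extend_apply' _ _ _ hk, Pi.zero_apply, mul_zero]
  · rw [Function.comp_apply, he.extend_apply]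

section KernelRegression

variable {X : Type*} (K : X → X → ℝ)

theorem mulVec_gramMatrix (S : Finset X) (α : S → ℝ) (i : S) :
    (gramMatrix K S *ᵥ α) i = (fun j : S => K i j) ⬝ᵥ α :=
  rfl

variable [DecidableEq X] (Y : X → ℝ)

theorem krUpdate_add_dotProduct {S : Finset X} (hS : IsUnit (gramMatrix K S).det)
    (f : X → ℝ) (α : S → ℝ) :
    krUpdate K Y (fun x => f x + (fun j : S => K x j) ⬝ᵥ α) S = krUpdate K Y f S := by
  funext x
  have hres : (fun j : S => Y j - (f j + (fun k : S => K j k) ⬝ᵥ α))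
      = (fun j : S => Y j - f j) - gramMatrix K S *ᵥ α := by
    funext j
    rw [Pi.sub_apply, mulVec_gramMatrix]
    ring
  simp only [krUpdate]
  rw [hres, mulVec_sub, mulVec_mulVec, nonsing_inv_mul _ hS, one_mulVec, dotProduct_sub]
  ring

theorem krUpdate_krUpdate_of_subset {T S : Finset X} (hTS : T ⊆ S)
    (hS : IsUnit (gramMatrix K S).det) (f : X → ℝ) :
    krUpdate K Y (krUpdate K Y f T) S = krUpdate K Y f S := by
  let incl : T → S := fun j => ⟨j, hTS j.2⟩
  have hincl : Function.Injective incl := fun _ _ h => Subtype.ext (Subtype.mk.inj h)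
  have hT : krUpdate K Y f T = fun x => f x + (fun j : S => K x j) ⬝ᵥ
      Function.extend incl ((gramMatrix K T)⁻¹ *ᵥ fun j : T => Y j - f j) 0 := by
    funext x
    exact congrArg (f x + ·) (dotProduct_comp_eq_dotProduct_extend hincl (fun j : S => K x j) _)
  rw [hT, krUpdate_add_dotProduct K Y hS]

end KernelRegression

/-- Warm-start equals cold-start along a nested chain (Theorem 1): sequentially
retraining on the increasing datasets `S 0 ⊆ S 1 ⊆ ⋯ ⊆ S (C-1)` produces the same
predictor as training from scratch on the largest dataset `S (C-1)` alone. -/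
theorem warm_start_eq_cold_start_chain {X : Type*} [DecidableEq X]
    (K : X → X → ℝ) (Y : X → ℝ) (C : ℕ) (hC : 0 < C)
    (S : Fin C → Finset X)
    (hmono : ∀ i j : Fin C, i ≤ j → S i ⊆ S j)
    (hinv : ∀ i : Fin C, IsUnit (gramMatrix K (S i)).det)
    (f : ℕ → (X → ℝ))
    (hstep : ∀ i : Fin C, f ((i : ℕ) + 1) = krUpdate K Y (f i) (S i)) :
    f C = krUpdate K Y (f 0) (S ⟨C - 1, by omega⟩) := by
  have cold : ∀ n (hn : n < C), f (n + 1) = krUpdate K Y (f 0) (S ⟨n, hn⟩) := by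
    intro n
    induction n with
    | zero => exact fun h => hstep ⟨0, h⟩
    | succ n ih =>
      intro hn
      rw [hstep ⟨n + 1, hn⟩, ih (by omega), krUpdate_krUpdate_of_subset K Y
        (hmono _ _ (Fin.mk_le_mk.mpr n.le_succ)) (hinv _)]
  simpa [Nat.sub_add_cancel hC] using cold (C - 1) (by omega)
end

section
/- Strict decrease of the residual norm for positive definite kernels: If K : Matrix (Fin n) (Fin n) ℝ is positive definite (K.PosDef) and v : Fin n → ℝ is nonzero, then the function t ↦ ‖(exp (−t • K)).mulVec v‖ is strictly antitone on [0, ∞) (StrictAntiOn on Set.Ici 0). -/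
/-- The matrix exponential (`Matrix.exp` in later Mathlib): the exponential in the
topological algebra of square matrices. -/
noncomputable def Matrix.exp (𝕂 : Type*) {n : ℕ} [Field 𝕂] [TopologicalSpace 𝕂]
    [IsTopologicalRing 𝕂] (A : Matrix (Fin n) (Fin n) 𝕂) : Matrix (Fin n) (Fin n) 𝕂 :=
  (NormedSpace.expSeries 𝕂 (Matrix (Fin n) (Fin n) 𝕂)).sum A

open Matrix

/-- The Euclidean (`ℓ²`) norm of a vector in `Fin n → ℝ`. -/
noncomputable def euclNorm {n : ℕ} (v : Fin n → ℝ) : ℝ :=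
  ‖(WithLp.equiv 2 (Fin n → ℝ)).symm v‖

/-!
Along `u t = exp (-t • K) v` one has `d/dt (u ⬝ᵥ u) = -2 (u ⬝ᵥ K u)`, which is negative because
`K` is positive definite and `u t ≠ 0` (`exp` of a matrix is invertible). So `‖u t‖²`, and with it
`‖u t‖`, is strictly decreasing on all of `ℝ`.
-/

theorem euclNorm_eq_sqrt_dotProduct {n : ℕ} (w : Fin n → ℝ) : euclNorm w = √(w ⬝ᵥ w) := by
  simp [euclNorm, EuclideanSpace.norm_eq, dotProduct, sq]

theorem Matrix.exp_eq_normedSpace_exp {n : ℕ} (A : Matrix (Fin n) (Fin n) ℝ) :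
    Matrix.exp ℝ A = NormedSpace.exp A := by
  rw [Matrix.exp, NormedSpace.exp_eq_expSeries_sum ℝ]

section Calculus

variable {𝕜 : Type*} [NontriviallyNormedField 𝕜] {m : Type*} [Fintype m]

theorem HasDerivAt.dotProduct {u w : 𝕜 → m → 𝕜} {u' w' : m → 𝕜} {t : 𝕜}
    (hu : HasDerivAt u u' t) (hw : HasDerivAt w w' t) :
    HasDerivAt (fun s => u s ⬝ᵥ w s) (u' ⬝ᵥ w t + u t ⬝ᵥ w') t := by
  have hcoord : ∀ i, HasDerivAt (fun s => u s i * w s i) (u' i * w t i + u t i * w' i) t :=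
    fun i => (hasDerivAt_pi.1 hu i).mul (hasDerivAt_pi.1 hw i)
  exact (HasDerivAt.fun_sum fun i _ => hcoord i).congr_deriv Finset.sum_add_distrib

theorem HasDerivAt.mulVec_const {n : Type*} {M : 𝕜 → Matrix n m 𝕜} {M' : Matrix n m 𝕜} {t : 𝕜}
    (hM : HasDerivAt M M' t) (v : m → 𝕜) : HasDerivAt (fun s => M s *ᵥ v) (M' *ᵥ v) t :=
  hasDerivAt_pi.2 fun i => HasDerivAt.fun_sum fun j _ =>
    (hasDerivAt_pi.1 (hasDerivAt_pi.1 hM i) j).mul_const (v j)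

end Calculus

attribute [local instance] Matrix.linftyOpNormedRing Matrix.linftyOpNormedAlgebra

variable {m : Type*} [Fintype m] [DecidableEq m]

section RCLike

variable {𝕂 : Type*} [RCLike 𝕂]

theorem Matrix.hasDerivAt_exp_smul_mulVec (A : Matrix m m 𝕂) (v : m → 𝕂) (t : 𝕂) :
    HasDerivAt (fun s : 𝕂 => NormedSpace.exp (s • A) *ᵥ v)
      (A *ᵥ (NormedSpace.exp (t • A) *ᵥ v)) t :=
  ((hasDerivAt_exp_smul_const' A t).mulVec_const v).congr_deriv (mulVec_mulVec _ _ _).symm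

theorem Matrix.exp_mulVec_ne_zero (A : Matrix m m 𝕂) {v : m → 𝕂} (hv : v ≠ 0) :
    NormedSpace.exp A *ᵥ v ≠ 0 :=
  fun h => hv (mulVec_injective_iff_isUnit.2 (Matrix.isUnit_exp A) (by rw [h, mulVec_zero]))

end RCLike

theorem Matrix.PosDef.strictAnti_dotProduct_self_exp_neg_smul_mulVec {K : Matrix m m ℝ}
    (hK : K.PosDef) {v : m → ℝ} (hv : v ≠ 0) :
    StrictAnti fun t : ℝ => (NormedSpace.exp (t • -K) *ᵥ v) ⬝ᵥ (NormedSpace.exp (t • -K) *ᵥ v) := by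
  set u := fun t : ℝ => NormedSpace.exp (t • -K) *ᵥ v
  have hu : ∀ t, HasDerivAt u ((-K) *ᵥ u t) t := hasDerivAt_exp_smul_mulVec (-K) v
  refine strictAnti_of_hasDerivAt_neg (fun t => (hu t).dotProduct (hu t)) fun t => ?_
  have hpos : 0 < u t ⬝ᵥ (K *ᵥ u t) := by
    simpa only [star_trivial] using hK.dotProduct_mulVec_pos (exp_mulVec_ne_zero _ hv)
  rw [dotProduct_comm, neg_mulVec, dotProduct_neg]
  linarith

/-- Strict decrease of the residual norm for positive definite kernels: for
positive definite `K` and nonzero `v`, the Euclidean norm of the residual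
`exp (−t • K) v` is strictly antitone on `[0, ∞)`. -/
theorem residual_norm_strictAnti (n : ℕ) (K : Matrix (Fin n) (Fin n) ℝ)
    (hK : K.PosDef) (v : Fin n → ℝ) (hv : v ≠ 0) :
    StrictAntiOn (fun t : ℝ => euclNorm ((Matrix.exp ℝ (-t • K)).mulVec v)) (Set.Ici 0) := by
  refine StrictAnti.strictAntiOn (fun s t hst => ?_) _
  simp only [euclNorm_eq_sqrt_dotProduct, Matrix.exp_eq_normedSpace_exp, neg_smul, ← smul_neg]
  exact Real.sqrt_lt_sqrt (Finset.sum_nonneg fun i _ => mul_self_nonneg _)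
    (hK.strictAnti_dotProduct_self_exp_neg_smul_mulVec hv hst)
end
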